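/- arXiv:math/9209216 — 6 statements merged into one kernel-verified Lean document; each statement's English description precedes it below -/
import Mathlib

section
/- If m ∈ ℕ and f₁, f₂ : E → ℂ satisfy |f₁(γ)| = |f₂(γ)| = 1 for all γ ∈ E and both f₁ and f₂ belong to AP(E,m,1/5), then the pointwise product f₁f₂ belongs to AP(E,m²,1/2). -/
open MeasureTheory Complex
open scoped ENNReal NNReal

noncomputable section

/-- The sign `±1` attached to a boolean, as a complex number. -/
def sgn (b : Bool) : ℂ := if b then 1 else -1

/-- `ν` is an `r`-norm on the complex vector space `X`. -/
def IsRNorm {X : Type*} [AddCommGroup X] [Module ℂ X] (r : ℝ) (ν : X → ℝ) : Prop :=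
  (∀ x : X, 0 ≤ ν x) ∧ (∀ x : X, x ≠ 0 → 0 < ν x) ∧
    (∀ (c : ℂ) (x : X), ν (c • x) = ‖c‖ * ν x) ∧
    (∀ x y : X, ν (x + y) ^ r ≤ ν x ^ r + ν y ^ r)

/-- `X` is complete for the metric `d(x,y) = ν(x-y)^r`, i.e. quasi-Banach. -/
def IsRComplete {X : Type*} [AddCommGroup X] [Module ℂ X] (r : ℝ) (ν : X → ℝ) : Prop :=
  ∀ u : ℕ → X, (∀ ε : ℝ, 0 < ε → ∃ N : ℕ, ∀ i ≥ N, ∀ j ≥ N, ν (u i - u j) ^ r < ε) →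
    ∃ x : X, ∀ ε : ℝ, 0 < ε → ∃ N : ℕ, ∀ i ≥ N, ν (u i - x) ^ r < ε

/-- The quasinorm `ν` is plurisubharmonic. -/
def IsPshNorm {X : Type*} [AddCommGroup X] [Module ℂ X] (ν : X → ℝ) : Prop :=
  ∀ x y : X, ν x ≤ (1 / (2 * Real.pi)) *
    ∫ θ in (0 : ℝ)..(2 * Real.pi), ν (x + Complex.exp (θ * Complex.I) • y)

/-- `γ : G → ℂ` is a continuous character of `G`. -/
def IsChar {G : Type*} [CommGroup G] [TopologicalSpace G] (γ : G → ℂ) : Prop :=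
  Continuous γ ∧ (∀ g h : G, γ (g * h) = γ g * γ h) ∧ ∀ g : G, ‖γ g‖ = 1

/-- The `L_p`-mean of `ν (∑ ε_k x_k)` over the Cantor group (the average over all
choices of signs, since the integrand depends on finitely many coordinates);
for `p = ∞` the supremum. -/
def radMean {X : Type*} [AddCommGroup X] [Module ℂ X] (ν : X → ℝ) (p : ℝ≥0∞) {n : ℕ}
    (x : Fin n → X) : ℝ :=
  if p = ⊤ then ⨆ θ : Fin n → Bool, ν (∑ k, sgn (θ k) • x k)
  else ((∑ θ : Fin n → Bool, ν (∑ k, sgn (θ k) • x k) ^ p.toReal) / 2 ^ n) ^ (1 / p.toReal)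

/-- The `L_p`-mean of `ν (∑ γ_k(g) x_k)` over `G`; for `p = ∞` the supremum. -/
def charMean {G : Type*} [MeasurableSpace G] {X : Type*} [AddCommGroup X] [Module ℂ X]
    (μG : Measure G) (ν : X → ℝ) (p : ℝ≥0∞) {n : ℕ} (γ : Fin n → G → ℂ) (x : Fin n → X) : ℝ :=
  if p = ⊤ then ⨆ g : G, ν (∑ k, γ k g • x k)
  else (∫ g, ν (∑ k, γ k g • x k) ^ p.toReal ∂μG) ^ (1 / p.toReal)

/-- `E` has property `𝓒_p(X)` (with quasinorm `ν` on `X`). -/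
def HasPropC {G : Type*} [MeasurableSpace G] {X : Type*} [AddCommGroup X] [Module ℂ X]
    (μG : Measure G) (p : ℝ≥0∞) (E : Set (G → ℂ)) (ν : X → ℝ) : Prop :=
  ∃ M : ℝ, 0 < M ∧ ∀ (n : ℕ) (γ : Fin n → G → ℂ), (∀ k, γ k ∈ E) → Function.Injective γ →
    ∀ x : Fin n → X,
      M⁻¹ * radMean ν p x ≤ charMean μG ν p γ x ∧ charMean μG ν p γ x ≤ M * radMean ν p x

/-- The `L_p`-norm of an `X`-valued function on `G`. -/
def pNorm {G : Type*} [MeasurableSpace G] {X : Type*} [AddCommGroup X] [Module ℂ X]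
    (μG : Measure G) (ν : X → ℝ) (p : ℝ≥0∞) (φ : G → X) : ℝ :=
  if p = ⊤ then ⨆ g : G, ν (φ g) else (∫ g, ν (φ g) ^ p.toReal ∂μG) ^ (1 / p.toReal)

/-- `f` belongs to `AP(E, N, δ)`. -/
def memAP {G : Type*} [CommGroup G] [TopologicalSpace G] (E : Set (G → ℂ)) (N : ℕ) (δ : ℝ)
    (f : (G → ℂ) → ℂ) : Prop :=
  ∃ (g : Fin N → G) (α : Fin N → ℂ), (∀ j, ‖α j‖ ≤ 1) ∧
    ∀ γ ∈ E, ‖f γ - ∑ j, α j * γ (g j)‖ ≤ δ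

/-- `E` is a set of interpolation (`I₀`-set). -/
def IsInterpolationSet {G : Type*} [CommGroup G] [TopologicalSpace G] (E : Set (G → ℂ)) : Prop :=
  ∀ f : (G → ℂ) → ℂ, (∃ B : ℝ, ∀ γ ∈ E, ‖f γ‖ ≤ B) → ∀ ε : ℝ, 0 < ε →
    ∃ (n : ℕ) (α : Fin n → ℂ) (g : Fin n → G),
      ∀ γ ∈ E, ‖f γ - ∑ j, α j * γ (g j)‖ ≤ ε

/-- `E` is a Sidon set. -/
def IsSidonSet {G : Type*} [CommGroup G] [TopologicalSpace G] (E : Set (G → ℂ)) : Prop :=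
  ∃ M : ℝ, 0 < M ∧ ∀ a : (G → ℂ) →₀ ℂ, ↑a.support ⊆ E →
    (∑ γ ∈ a.support, ‖a γ‖) ≤ M * ⨆ g : G, ‖∑ γ ∈ a.support, a γ * γ g‖

/-!
Expanding the product of the two approximating sums `∑ αⱼ γ(gⱼ)` and `∑ βₖ γ(hₖ)` gives, by
multiplicativity of the characters, the `m²`-term sum `∑ αⱼ βₖ γ(gⱼ hₖ)` with coefficients still
of modulus at most `1`. Writing `f₁ f₂ - S₁ S₂ = f₁ (f₂ - S₂) + S₂ (f₁ - S₁)` with `|f₁| = 1` and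
`|S₂| ≤ 1 + 1/5`, the error is at most `1/5 + (6/5)(1/5) = 11/25 < 1/2`.
-/

theorem norm_mul_sub_mul_le {R : Type*} [SeminormedRing R] (a b s t : R) :
    ‖a * b - s * t‖ ≤ ‖a‖ * ‖b - t‖ + ‖t‖ * ‖a - s‖ :=
  calc ‖a * b - s * t‖ = ‖a * (b - t) + (a - s) * t‖ := by noncomm_ring
    _ ≤ ‖a‖ * ‖b - t‖ + ‖a - s‖ * ‖t‖ :=
        (norm_add_le _ _).trans (add_le_add (norm_mul_le _ _) (norm_mul_le _ _))
    _ = ‖a‖ * ‖b - t‖ + ‖t‖ * ‖a - s‖ := by rw [mul_comm ‖a - s‖]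

theorem sum_mul_sum_of_map_mul {G R : Type*} [Mul G] [CommSemiring R] {γ : G → R}
    (hγ : ∀ g h, γ (g * h) = γ g * γ h) {ι κ : Type*} [Fintype ι] [Fintype κ] (α : ι → R) (g : ι → G) (β : κ → R) (h : κ → G) :
    (∑ i, α i * γ (g i)) * (∑ k, β k * γ (h k))
      = ∑ p : ι × κ, α p.1 * β p.2 * γ (g p.1 * h p.2) := by
  rw [Finset.sum_mul_sum, ← Finset.univ_product_univ, Finset.sum_product]
  refine Finset.sum_congr rfl fun i _ => Finset.sum_congr rfl fun k _ => ?_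
  rw [hγ]
  ring

section memAP

variable {G : Type*} [CommGroup G] [TopologicalSpace G] {E : Set (G → ℂ)}

theorem memAP.mono {N : ℕ} {δ δ' : ℝ} {f : (G → ℂ) → ℂ} (hf : memAP E N δ f) (hδ : δ ≤ δ') :
    memAP E N δ' f :=
  let ⟨g, α, hα, hfα⟩ := hf
  ⟨g, α, hα, fun γ hγ => (hfα γ hγ).trans hδ⟩

theorem memAP_of_equiv {ι : Type*} [Fintype ι] {N : ℕ} (e : ι ≃ Fin N) {δ : ℝ}
    {f : (G → ℂ) → ℂ} (g : ι → G) (α : ι → ℂ) (hα : ∀ i, ‖α i‖ ≤ 1)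
    (hf : ∀ γ ∈ E, ‖f γ - ∑ i, α i * γ (g i)‖ ≤ δ) : memAP E N δ f :=
  ⟨g ∘ e.symm, α ∘ e.symm, fun j => hα _, fun γ hγ => by
    simpa only [Function.comp_apply, e.symm.sum_comp (fun i => α i * γ (g i))] using hf γ hγ⟩

theorem memAP.mul (hE : ∀ γ ∈ E, ∀ g h, γ (g * h) = γ g * γ h) {N M : ℕ} {δ₁ δ₂ : ℝ}
    {f₁ f₂ : (G → ℂ) → ℂ} (h₁ : ∀ γ ∈ E, ‖f₁ γ‖ ≤ 1) (h₂ : ∀ γ ∈ E, ‖f₂ γ‖ ≤ 1)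
    (hf₁ : memAP E N δ₁ f₁) (hf₂ : memAP E M δ₂ f₂) :
    memAP E (N * M) (δ₂ + (1 + δ₂) * δ₁) (fun γ => f₁ γ * f₂ γ) := by
  obtain ⟨g, α, hα, hfα⟩ := hf₁
  obtain ⟨h, β, hβ, hfβ⟩ := hf₂
  refine memAP_of_equiv finProdFinEquiv (fun p => g p.1 * h p.2) (fun p => α p.1 * β p.2)
    (fun p => by simpa only [norm_mul] using mul_le_one₀ (hα _) (norm_nonneg _) (hβ _))
    fun γ hγ => ?_
  rw [← sum_mul_sum_of_map_mul (hE γ hγ)]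
  set S₁ := ∑ i, α i * γ (g i)
  set S₂ := ∑ k, β k * γ (h k)
  have hS₂ : ‖S₂‖ ≤ 1 + δ₂ :=
    calc ‖S₂‖ ≤ ‖f₂ γ‖ + ‖S₂ - f₂ γ‖ := norm_le_norm_add_norm_sub' S₂ (f₂ γ)
      _ ≤ 1 + δ₂ := add_le_add (h₂ γ hγ) (norm_sub_rev S₂ (f₂ γ) ▸ hfβ γ hγ)
  calc ‖f₁ γ * f₂ γ - S₁ * S₂‖ ≤ ‖f₁ γ‖ * ‖f₂ γ - S₂‖ + ‖S₂‖ * ‖f₁ γ - S₁‖ :=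
        norm_mul_sub_mul_le _ _ _ _
    _ ≤ 1 * δ₂ + (1 + δ₂) * δ₁ := by
        have hδ₂ : 0 ≤ δ₂ := (norm_nonneg _).trans (hfβ γ hγ)
        gcongr
        exacts [h₁ γ hγ, hfβ γ hγ, hfα γ hγ]
    _ = δ₂ + (1 + δ₂) * δ₁ := by rw [one_mul]

end memAP

theorem statement2_general {G : Type} [CommGroup G] [TopologicalSpace G]
    (E : Set (G → ℂ)) (hE : ∀ γ ∈ E, IsChar γ) (m : ℕ)
    (f₁ f₂ : (G → ℂ) → ℂ)
    (h₁ : ∀ γ ∈ E, ‖f₁ γ‖ = 1) (h₂ : ∀ γ ∈ E, ‖f₂ γ‖ = 1)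
    (hap₁ : memAP E m (1/5) f₁) (hap₂ : memAP E m (1/5) f₂) :
    memAP E (m ^ 2) (1/2) (fun γ => f₁ γ * f₂ γ) := by
  rw [sq]
  refine (memAP.mul (fun γ hγ => (hE γ hγ).2.1) (fun γ hγ => (h₁ γ hγ).le)
    (fun γ hγ => (h₂ γ hγ).le) hap₁ hap₂).mono ?_
  norm_num

/-- If `f₁, f₂ : E → ℂ` are unimodular on `E` and both lie in
`AP(E, m, 1/5)`, then the pointwise product `f₁ f₂` lies in `AP(E, m², 1/2)`. -/
theorem statement2 {G : Type} [CommGroup G] [TopologicalSpace G] [IsTopologicalGroup G]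
    [CompactSpace G] (E : Set (G → ℂ)) (hE : ∀ γ ∈ E, IsChar γ) (m : ℕ)
    (f₁ f₂ : (G → ℂ) → ℂ)
    (h₁ : ∀ γ ∈ E, ‖f₁ γ‖ = 1) (h₂ : ∀ γ ∈ E, ‖f₂ γ‖ = 1)
    (hap₁ : memAP E m (1/5) f₁) (hap₂ : memAP E m (1/5) f₂) :
    memAP E (m ^ 2) (1/2) (fun γ => f₁ γ * f₂ γ) :=
  statement2_general E hE m f₁ f₂ h₁ h₂ hap₁ hap₂

end
end

section
/- Suppose N ∈ ℕ is such that every f : E → ℂ with sup_{γ∈E}|f(γ)| ≤ 1 belongs to AP(E,N,1/2). Then for every such f there exist complex numbers (c_j)_{j=1}^∞ with |c_j| ≤ 2·2^{−j/N} for all j and elements (g_j)_{j=1}^∞ of G such that f(γ) = ∑_{j=1}^∞ c_j γ(g_j) for all γ ∈ E. -/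
/-!
Choose for every `p` in the unit ball of `ℓ∞(E)` an approximant `A p = ∑ᵢ αᵢ(p) γ(gᵢ(p))` from
`AP(E, N, 1/2)`. The map `p ↦ 2 (p - A p)` preserves the unit ball, and unwinding `M` of its
steps from `p₀ = f` gives `f = ∑_{m<M} 2⁻ᵐ A pₘ + 2⁻ᴹ p_M`, hence `f = ∑ₘ 2⁻ᵐ A pₘ`. Listing the
`N` terms of the `m`-th block at the positions `j = mN + i` gives coefficients of modulus at most
`2^{-⌊j/N⌋} ≤ 2 · 2^{-(j+1)/N}`; as characters are unimodular, the series converges absolutely.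
-/

open MeasureTheory Complex
open scoped ENNReal NNReal

noncomputable section

open Filter Topology

section Halving

variable {X : Type*} [AddCommGroup X] [Module ℂ X] (A : X → X)

def halvingStep (p : X) : X := (2 : ℂ) • (p - A p)

theorem sum_add_halvingStep_iterate (f : X) (M : ℕ) :
    ∑ m ∈ Finset.range M, (1 / 2 : ℂ) ^ m • A ((halvingStep A)^[m] f) +
      (1 / 2 : ℂ) ^ M • (halvingStep A)^[M] f = f := by
  induction M with
  | zero => simp
  | succ M ih =>
    rw [Finset.sum_range_succ, Function.iterate_succ_apply', halvingStep]
    refine Eq.trans ?_ ih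
    module

end Halving

section HalvingOn

variable {ι : Type*} {E : Set ι} {A : (ι → ℂ) → ι → ℂ}

theorem norm_halvingStep_iterate_le
    (hA : ∀ p : ι → ℂ, (∀ γ ∈ E, ‖p γ‖ ≤ 1) → ∀ γ ∈ E, ‖p γ - A p γ‖ ≤ 1 / 2)
    {f : ι → ℂ} (hf : ∀ γ ∈ E, ‖f γ‖ ≤ 1) (m : ℕ) :
    ∀ γ ∈ E, ‖(halvingStep A)^[m] f γ‖ ≤ 1 := by
  induction m with
  | zero => exact hf
  | succ m ih =>
    intro γ hγ
    have := hA _ ih γ hγ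
    rw [Function.iterate_succ_apply', halvingStep]
    simp only [Pi.smul_apply, Pi.sub_apply, smul_eq_mul, norm_mul, Complex.norm_two]
    linarith

theorem hasSum_halvingStep_iterate
    (hA : ∀ p : ι → ℂ, (∀ γ ∈ E, ‖p γ‖ ≤ 1) → ∀ γ ∈ E, ‖p γ - A p γ‖ ≤ 1 / 2)
    {f : ι → ℂ} (hf : ∀ γ ∈ E, ‖f γ‖ ≤ 1) {γ : ι} (hγ : γ ∈ E) :
    HasSum (fun m ↦ (1 / 2 : ℂ) ^ m * A ((halvingStep A)^[m] f) γ) (f γ) := by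
  have hbound := fun m ↦ norm_halvingStep_iterate_le hA hf m γ hγ
  have hhalf : ‖(1 / 2 : ℂ)‖ = 1 / 2 := by simp
  have hsummable : Summable (fun m ↦ (1 / 2 : ℂ) ^ m * A ((halvingStep A)^[m] f) γ) := by
    refine .of_norm_bounded ((summable_geometric_two).mul_left (3 / 2)) fun m ↦ ?_
    have := norm_le_norm_add_norm_sub ((halvingStep A)^[m] f γ) (A ((halvingStep A)^[m] f) γ)
    have := hA _ (norm_halvingStep_iterate_le hA hf m) γ hγ
    rw [norm_mul, norm_pow, hhalf, mul_comm]
    gcongr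
    linarith [hbound m]
  have hremainder : Tendsto (fun M ↦ (1 / 2 : ℂ) ^ M * (halvingStep A)^[M] f γ) atTop (𝓝 0) := by
    refine squeeze_zero_norm (fun M ↦ ?_) (tendsto_pow_atTop_nhds_zero_of_lt_one (r := (1 / 2 : ℝ))
      (by norm_num) (by norm_num))
    rw [norm_mul, norm_pow, hhalf]
    exact mul_le_of_le_one_right (by positivity) (hbound M)
  rw [hsummable.hasSum_iff_tendsto_nat]
  have hpartial : ∀ M, ∑ m ∈ Finset.range M, (1 / 2 : ℂ) ^ m * A ((halvingStep A)^[m] f) γ =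
      f γ - (1 / 2 : ℂ) ^ M * (halvingStep A)^[M] f γ := fun M ↦ by
    rw [eq_sub_iff_add_eq]
    simpa using congrFun (sum_add_halvingStep_iterate A f M) γ
  simp_rw [hpartial]
  simpa using (tendsto_const_nhds (x := f γ)).sub hremainder

-- Take `A = 0`: the halving series is then identically zero.
theorem eq_zero_of_forall_norm_le_half
    (h : ∀ p : ι → ℂ, (∀ γ ∈ E, ‖p γ‖ ≤ 1) → ∀ γ ∈ E, ‖p γ‖ ≤ 1 / 2)
    {f : ι → ℂ} (hf : ∀ γ ∈ E, ‖f γ‖ ≤ 1) {γ : ι} (hγ : γ ∈ E) : f γ = 0 := by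
  have hA : ∀ p : ι → ℂ, (∀ γ ∈ E, ‖p γ‖ ≤ 1) →
      ∀ γ ∈ E, ‖p γ - (0 : (ι → ℂ) → ι → ℂ) p γ‖ ≤ 1 / 2 := by
    simpa only [Pi.zero_apply, sub_zero] using h
  have hsum := hasSum_halvingStep_iterate hA hf hγ
  simp only [Pi.zero_apply, mul_zero] at hsum
  exact hsum.unique hasSum_zero

end HalvingOn

theorem summable_half_pow_mul {ι : Type*} [Finite ι] {u : ℕ × ι → ℂ} (hu : ∀ x, ‖u x‖ ≤ 1) :
    Summable fun x ↦ (1 / 2 : ℂ) ^ x.1 * u x := by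
  have hgeom : Summable fun x : ℕ × ι ↦ (1 / 2 : ℝ) ^ x.1 * 1 :=
    summable_geometric_two.mul_of_nonneg .of_finite (fun _ ↦ by positivity) fun _ ↦ zero_le_one
  refine .of_norm_bounded hgeom fun x ↦ ?_
  simpa using hu x

theorem tsum_divModEquiv_eq_of_hasSum {α : Type*} [AddCommGroup α] [TopologicalSpace α]
    [IsTopologicalAddGroup α] [T2Space α] {N : ℕ} [NeZero N] {u : ℕ × Fin N → α} {a : α}
    (hu : Summable u) (h : HasSum (fun m ↦ ∑ i, u (m, i)) a) :
    ∑' j, u (Nat.divModEquiv N j) = a := by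
  rw [Equiv.tsum_eq]
  exact (hu.hasSum.prod_fiberwise fun m ↦ hasSum_fintype _).unique h

theorem half_pow_div_le_two_mul_two_rpow {N : ℕ} (hN : 0 < N) (j : ℕ) :
    (1 / 2 : ℝ) ^ (j / N) ≤ 2 * (2 : ℝ) ^ (-((j : ℝ) + 1) / N) := by
  have hblock : j + 1 ≤ (j / N + 1) * N := by
    have := Nat.div_add_mod j N
    have := Nat.mod_lt j hN
    nlinarith
  have hexp : -((j / N : ℕ) + 1 : ℝ) ≤ -((j : ℝ) + 1) / N := by
    rw [neg_div, neg_le_neg_iff, div_le_iff₀ (by positivity)]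
    exact_mod_cast hblock
  calc (1 / 2 : ℝ) ^ (j / N) = 2 * (2 : ℝ) ^ (-((j / N : ℕ) + 1 : ℝ)) := by
        rw [Real.rpow_neg zero_le_two, ← Nat.cast_succ, Real.rpow_natCast, pow_succ, one_div,
          inv_pow]
        field_simp
    _ ≤ 2 * (2 : ℝ) ^ (-((j : ℝ) + 1) / N) := by gcongr; norm_num

theorem statement3_general {G : Type} [CommGroup G] [TopologicalSpace G]
    (E : Set (G → ℂ)) (hE : ∀ γ ∈ E, IsChar γ) (N : ℕ)
    (h : ∀ f : (G → ℂ) → ℂ, (∀ γ ∈ E, ‖f γ‖ ≤ 1) → memAP E N (1/2) f) :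
    ∀ f : (G → ℂ) → ℂ, (∀ γ ∈ E, ‖f γ‖ ≤ 1) →
      ∃ (c : ℕ → ℂ) (g : ℕ → G),
        (∀ j : ℕ, ‖c j‖ ≤ 2 * (2 : ℝ) ^ (-((j : ℝ) + 1) / (N : ℝ))) ∧
        ∀ γ ∈ E, f γ = ∑' j : ℕ, c j * γ (g j) := by
  intro f hf
  choose! g α hα hap using h
  rcases N.eq_zero_or_pos with rfl | hN
  · -- the bound reads `‖c j‖ ≤ 2`, since `x / 0 = 0`
    refine ⟨0, 1, fun j ↦ by simp, fun γ hγ ↦ ?_⟩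
    simpa using eq_zero_of_forall_norm_le_half (fun p hp ↦ by simpa using hap p hp) hf hγ
  have : NeZero N := ⟨hN.ne'⟩
  set A : ((G → ℂ) → ℂ) → (G → ℂ) → ℂ := fun p γ ↦ ∑ i, α p i * γ (g p i)
  set p : ℕ → (G → ℂ) → ℂ := fun m ↦ (halvingStep A)^[m] f
  have hsum : ∀ γ ∈ E, HasSum (fun m ↦ (1 / 2 : ℂ) ^ m * A (p m) γ) (f γ) :=
    fun γ hγ ↦ hasSum_halvingStep_iterate hap hf hγ
  have hαp : ∀ m i, ‖α (p m) i‖ ≤ 1 := fun m ↦ hα _ (norm_halvingStep_iterate_le hap hf m)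
  let e := Nat.divModEquiv N
  refine ⟨fun j ↦ (1 / 2) ^ (e j).1 * α (p (e j).1) (e j).2, fun j ↦ g (p (e j).1) (e j).2,
    fun j ↦ ?_, fun γ hγ ↦ ?_⟩
  · refine le_trans ?_ (half_pow_div_le_two_mul_two_rpow hN j)
    simpa [e] using hαp (j / N) (e j).2
  · have hγ1 := (hE γ hγ).2.2
    refine (tsum_divModEquiv_eq_of_hasSum
      (u := fun x ↦ (1 / 2) ^ x.1 * α (p x.1) x.2 * γ (g (p x.1) x.2)) ?_ ?_).symm
    · simpa only [mul_assoc] using summable_half_pow_mul fun x ↦ by simpa [hγ1] using hαp x.1 x.2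
    · simpa [A, Finset.mul_sum, mul_assoc] using hsum γ hγ

/-- If `N` is such that every `f` in the unit ball of `ℓ∞(E)` lies in
`AP(E, N, 1/2)`, then every such `f` can be written `f(γ) = ∑_{j≥1} c_j γ(g_j)` with
`|c_j| ≤ 2 ⬝ 2^{-j/N}`. -/
theorem statement3 {G : Type} [CommGroup G] [TopologicalSpace G] [IsTopologicalGroup G]
    [CompactSpace G] (E : Set (G → ℂ)) (hE : ∀ γ ∈ E, IsChar γ) (N : ℕ)
    (h : ∀ f : (G → ℂ) → ℂ, (∀ γ ∈ E, ‖f γ‖ ≤ 1) → memAP E N (1/2) f) :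
    ∀ f : (G → ℂ) → ℂ, (∀ γ ∈ E, ‖f γ‖ ≤ 1) →
      ∃ (c : ℕ → ℂ) (g : ℕ → G),
        (∀ j : ℕ, ‖c j‖ ≤ 2 * (2 : ℝ) ^ (-((j : ℝ) + 1) / (N : ℝ))) ∧
        ∀ γ ∈ E, f γ = ∑' j : ℕ, c j * γ (g j) :=
  statement3_general E hE N h

end
end

section
/- Let F be a finite set of distinct continuous characters of G and let 0 < r < 1. For f : F → ℂ define ‖f‖_A as the infimum of (∑_{j=1}^∞ |c_j|^r)^{1/r} over all sequences (c_j)_{j=1}^∞ in ℂ with ∑_j |c_j|^r < ∞ and (g_j)_{j=1}^∞ in G such that f(γ) = ∑_{j=1}^∞ c_j γ(g_j) for all γ ∈ F. Then ‖f‖_A is finite for every f : F → ℂ, ‖·‖_A is an r-norm on the space of all functions F → ℂ, and it is submultiplicative for the pointwise product: ‖f₁f₂‖_A ≤ ‖f₁‖_A·‖f₂‖_A for all f₁, f₂ : F → ℂ. -/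
open MeasureTheory Complex
open scoped ENNReal NNReal

noncomputable section

/-- The quasinorm `‖f‖_A` on `ℓ∞(F)`: the infimum of `(∑ |c_j|^r)^{1/r}` over all
representations `f(γ) = ∑_j c_j γ(g_j)` for `γ ∈ F`. -/
def normA {G : Type} [CommGroup G] [TopologicalSpace G] (r : ℝ) (F : Finset (G → ℂ))
    (f : ↥F → ℂ) : ℝ :=
  sInf {t : ℝ | ∃ (c : ℕ → ℂ) (g : ℕ → G), Summable (fun j => ‖c j‖ ^ r) ∧
    (∀ γ : ↥F, f γ = ∑' j : ℕ, c j * (γ : G → ℂ) (g j)) ∧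
    t = (∑' j : ℕ, ‖c j‖ ^ r) ^ (1 / r)}

/-!
Distinct characters are linearly independent, so the point evaluations `γ ↦ γ g` span `ℂ^F`
and every `f` has a finite representation. Representations of `x` and `y` concatenate to one of
`x + y`, and the `ℕ × ℕ`-indexed products of their terms represent `x * y` because characters are
multiplicative; the costs `∑ |c_j|^r` add, resp. multiply. For `r ≤ 1` one has
`∑ |c_j| ≤ (∑ |c_j|^r)^{1/r}`, which makes all series absolutely convergent and gives
`|f γ| ≤ ‖f‖_A`. Taking infima of the costs, `‖·‖_A ^ r` is subadditive and `r`-homogeneous.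
-/

open Function
open scoped Pointwise

section RpowSeries

variable {ι : Type*} {r : ℝ}

theorem summable_and_tsum_le_of_summable_rpow (hr0 : 0 < r) (hr1 : r ≤ 1) {b : ι → ℝ}
    (hb : ∀ i, 0 ≤ b i) (h : Summable fun i => b i ^ r) :
    Summable b ∧ ∑' i, b i ≤ (∑' i, b i ^ r) ^ (1 / r) := by
  set S := ∑' i, b i ^ r
  have hS : 0 ≤ S := tsum_nonneg fun i => Real.rpow_nonneg (hb i) r
  have hexp : r + r * (1 / r - 1) = 1 := by field_simp; ring
  -- `b i ^ r ≤ S`, so `b i = b i ^ r * b i ^ (1 - r) ≤ b i ^ r * S ^ ((1 - r) / r)`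
  have hbound : ∀ i, b i ≤ b i ^ r * S ^ (1 / r - 1) := fun i => calc
    b i = b i ^ r * (b i ^ r) ^ (1 / r - 1) := by
      rw [← Real.rpow_mul (hb i), ← Real.rpow_add' (hb i) (by rw [hexp]; exact one_ne_zero),
        hexp, Real.rpow_one]
    _ ≤ b i ^ r * S ^ (1 / r - 1) :=
      mul_le_mul_of_nonneg_left (Real.rpow_le_rpow (Real.rpow_nonneg (hb i) r)
        (h.le_tsum i fun j _ => Real.rpow_nonneg (hb j) r)
        (sub_nonneg.2 (one_le_one_div hr0 hr1))) (Real.rpow_nonneg (hb i) r)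
  have hsum : Summable b := .of_nonneg_of_le hb hbound (h.mul_right _)
  refine ⟨hsum, ?_⟩
  calc ∑' i, b i ≤ ∑' i, b i ^ r * S ^ (1 / r - 1) := hsum.tsum_le_tsum hbound (h.mul_right _)
    _ = S ^ (1 / r) := by
      rw [tsum_mul_right, ← Real.rpow_one_add' hS (by simp [hr0.ne'])]
      ring_nf

theorem norm_tsum_rpow_le_tsum_norm_rpow {E : Type*} [NormedAddCommGroup E] (hr0 : 0 < r)
    (hr1 : r ≤ 1) {a : ι → E} (h : Summable fun i => ‖a i‖ ^ r) :
    ‖∑' i, a i‖ ^ r ≤ ∑' i, ‖a i‖ ^ r := by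
  obtain ⟨hsum, hle⟩ := summable_and_tsum_le_of_summable_rpow hr0 hr1 (fun i => norm_nonneg _) h
  have hS : 0 ≤ ∑' i, ‖a i‖ ^ r := tsum_nonneg fun i => Real.rpow_nonneg (norm_nonneg _) r
  calc ‖∑' i, a i‖ ^ r ≤ ((∑' i, ‖a i‖ ^ r) ^ (1 / r)) ^ r :=
        Real.rpow_le_rpow (norm_nonneg _) ((norm_tsum_le_tsum_norm hsum).trans hle) hr0.le
    _ = ∑' i, ‖a i‖ ^ r := by rw [one_div, Real.rpow_inv_rpow hS hr0.ne']

end RpowSeries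

theorem isRNorm_rpow_one_div {X : Type*} [AddCommGroup X] [Module ℂ X] {r : ℝ} (hr0 : 0 < r)
    {κ : X → ℝ} (hκ0 : ∀ x, 0 ≤ κ x) (hpos : ∀ x, x ≠ 0 → 0 < κ x)
    (hsmul : ∀ (c : ℂ) x, κ (c • x) ≤ ‖c‖ ^ r * κ x) (hadd : ∀ x y, κ (x + y) ≤ κ x + κ y) :
    IsRNorm r fun x => κ x ^ (1 / r) := by
  have hhom : ∀ (c : ℂ) x, κ (c • x) = ‖c‖ ^ r * κ x := by
    intro c x
    rcases eq_or_ne c 0 with rfl | hc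
    · exact (hsmul 0 x).antisymm (by simpa [Real.zero_rpow hr0.ne'] using hκ0 _)
    refine (hsmul c x).antisymm ?_
    have hc' : ‖c‖ ^ r * ‖c⁻¹‖ ^ r = 1 := by
      rw [norm_inv, Real.inv_rpow (norm_nonneg c),
        mul_inv_cancel₀ (Real.rpow_pos_of_pos (norm_pos_iff.2 hc) r).ne']
    calc ‖c‖ ^ r * κ x = ‖c‖ ^ r * κ (c⁻¹ • c • x) := by rw [inv_smul_smul₀ hc]
      _ ≤ ‖c‖ ^ r * (‖c⁻¹‖ ^ r * κ (c • x)) := by gcongr; exact hsmul _ _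
      _ = κ (c • x) := by rw [← mul_assoc, hc', one_mul]
  refine ⟨fun x => Real.rpow_nonneg (hκ0 x) _, fun x hx => Real.rpow_pos_of_pos (hpos x hx) _,
    fun c x => ?_, fun x y => ?_⟩
  · dsimp only
    rw [hhom, Real.mul_rpow (Real.rpow_nonneg (norm_nonneg c) r) (hκ0 x),
      ← Real.rpow_mul (norm_nonneg c), mul_one_div_cancel hr0.ne', Real.rpow_one]
  · simp only [one_div]
    rw [Real.rpow_inv_rpow (hκ0 _) hr0.ne', Real.rpow_inv_rpow (hκ0 _) hr0.ne',
      Real.rpow_inv_rpow (hκ0 _) hr0.ne']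
    exact hadd x y

theorem Real.sInf_le_sInf_mul_sInf {A B C : Set ℝ} (hA : A.Nonempty) (hB : B.Nonempty)
    (hC : BddBelow C) (hA0 : ∀ a ∈ A, 0 ≤ a) (hB0 : ∀ b ∈ B, 0 ≤ b)
    (hmul : ∀ a ∈ A, ∀ b ∈ B, a * b ∈ C) : sInf C ≤ sInf A * sInf B := by
  have hb : ∀ b ∈ B, sInf C ≤ sInf A * b := fun b hb => calc
    sInf C ≤ sInf (b • A) := csInf_le_csInf hC (hA.smul_set)
        (Set.smul_set_subset_iff.2 fun a ha => by
          rw [smul_eq_mul, mul_comm]; exact hmul a ha b hb)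
    _ = sInf A * b := by rw [Real.sInf_smul_of_nonneg (hB0 b hb), smul_eq_mul, mul_comm]
  calc sInf C ≤ sInf (sInf A • B) :=
        le_csInf hB.smul_set (by rintro _ ⟨b, hb', rfl⟩; exact hb b hb')
    _ = sInf A * sInf B := Real.sInf_smul_of_nonneg (Real.sInf_nonneg hA0) B

section Characters

variable {G : Type*} [CommGroup G] [TopologicalSpace G] {γ : G → ℂ}

theorem IsChar.map_one (h : IsChar γ) : γ 1 = 1 := by
  have hne : γ 1 ≠ 0 := norm_ne_zero_iff.1 (by rw [h.2.2 1]; exact one_ne_zero)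
  exact mul_left_cancel₀ hne (by rw [← h.2.1, one_mul, mul_one])

def IsChar.toMonoidHom (h : IsChar γ) : G →* ℂ where
  toFun := γ
  map_one' := h.map_one
  map_mul' := h.2.1

theorem IsChar.norm_mul_apply (h : IsChar γ) (c : ℂ) (g : G) : ‖c * γ g‖ = ‖c‖ := by
  rw [norm_mul, h.2.2, mul_one]

theorem IsChar.summable_norm_mul {ι : Type*} {r : ℝ} (h : IsChar γ) (hr0 : 0 < r) (hr1 : r ≤ 1)
    {c : ι → ℂ} (hc : Summable fun i => ‖c i‖ ^ r) (g : ι → G) :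
    Summable fun i => ‖c i * γ (g i)‖ := by
  simpa only [h.norm_mul_apply] using
    (summable_and_tsum_le_of_summable_rpow hr0 hr1 (fun i => norm_nonneg _) hc).1

theorem linearIndependent_of_isChar (F : Finset (G → ℂ)) (hF : ∀ γ ∈ F, IsChar γ) :
    LinearIndependent ℂ fun γ : F => (γ : G → ℂ) :=
  (linearIndependent_monoidHom G ℂ).comp (fun γ : F => (hF γ γ.2).toMonoidHom)
    fun _ _ h => Subtype.ext (congrArg DFunLike.coe h)

end Characters

theorem LinearIndependent.span_range_eval_eq_top {ι X K : Type*} [Field K] [Fintype ι]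
    {χ : ι → X → K} (h : LinearIndependent K χ) :
    Submodule.span K (Set.range fun x i => χ i x) = ⊤ := by
  classical
  rw [← Submodule.dualAnnihilator_eq_bot_iff, Submodule.eq_bot_iff]
  intro φ hφ
  rw [Submodule.mem_dualAnnihilator] at hφ
  set a : ι → K := fun i => φ fun j => if i = j then 1 else 0
  have hφχ : ∑ i, a i • χ i = 0 := by
    funext x
    have := hφ _ (Submodule.subset_span ⟨x, rfl⟩)
    rw [LinearMap.pi_apply_eq_sum_univ] at this
    simpa [a, mul_comm] using this
  have ha : ∀ i, (φ fun j => if i = j then 1 else 0) = 0 :=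
    Fintype.linearIndependent_iff.1 h a hφχ
  refine LinearMap.ext fun x => ?_
  rw [LinearMap.pi_apply_eq_sum_univ]
  simp [ha]

section Representations

variable {G : Type} {r : ℝ} {F : Finset (G → ℂ)} {f x y : F → ℂ} {s t : ℝ}

def reprCost (r : ℝ) (F : Finset (G → ℂ)) (f : F → ℂ) : Set ℝ :=
  {s | ∃ (c : ℕ → ℂ) (g : ℕ → G), Summable (fun j => ‖c j‖ ^ r) ∧
    (∀ γ : F, f γ = ∑' j, c j * (γ : G → ℂ) (g j)) ∧ s = ∑' j, ‖c j‖ ^ r}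

theorem nonneg_of_mem_reprCost (hs : s ∈ reprCost r F f) : 0 ≤ s := by
  obtain ⟨c, g, -, -, rfl⟩ := hs
  exact tsum_nonneg fun j => Real.rpow_nonneg (norm_nonneg _) r

theorem reprCost_bddBelow : BddBelow (reprCost r F f) :=
  ⟨0, fun _ => nonneg_of_mem_reprCost⟩

theorem smul_mem_reprCost (a : ℂ) (hs : s ∈ reprCost r F f) :
    ‖a‖ ^ r * s ∈ reprCost r F (a • f) := by
  obtain ⟨c, g, hc, hf, rfl⟩ := hs
  have hnorm : ∀ j, ‖a * c j‖ ^ r = ‖a‖ ^ r * ‖c j‖ ^ r := fun j => by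
    rw [norm_mul, Real.mul_rpow (norm_nonneg _) (norm_nonneg _)]
  refine ⟨fun j => a * c j, g, by simpa only [hnorm] using hc.mul_left _, fun γ => ?_,
    by simp_rw [hnorm, tsum_mul_left]⟩
  rw [Pi.smul_apply, smul_eq_mul, hf, ← tsum_mul_left]
  simp_rw [mul_assoc]

variable [CommGroup G]

theorem tsum_mem_reprCost_of_countable (hr0 : 0 < r) {ι : Type*} [Countable ι] {c : ι → ℂ}
    {g : ι → G} (hc : Summable fun i => ‖c i‖ ^ r)
    (hf : ∀ γ : F, f γ = ∑' i, c i * (γ : G → ℂ) (g i)) :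
    ∑' i, ‖c i‖ ^ r ∈ reprCost r F f := by
  obtain ⟨e, he⟩ := exists_injective_nat ι
  -- outside the range of `e`, the padding `(0, 1)` contributes only zero terms
  set p : ℕ → ℂ × G := extend e (fun i => (c i, g i)) fun _ => (0, 1)
  have hext : ∀ {β : Type} [Zero β] (Φ : ℂ × G → β), Φ (0, 1) = 0 →
      (fun j => Φ (p j)) = extend e (fun i => Φ (c i, g i)) 0 := fun Φ h0 =>
    funext fun j => by rw [apply_extend Φ]; congr 1; exact funext fun _ => h0
  have hnorm := hext (fun q => ‖q.1‖ ^ r) (by simp [Real.zero_rpow hr0.ne'])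
  refine ⟨fun j => (p j).1, fun j => (p j).2, ?_, fun γ => ?_, ?_⟩
  · rw [hnorm]
    exact (summable_extend_zero he).2 hc
  · rw [hf γ, hext (fun q => q.1 * (γ : G → ℂ) q.2) (zero_mul _), tsum_extend_zero he]
  · rw [hnorm, tsum_extend_zero he]

variable [TopologicalSpace G]

theorem normA_eq_sInf_reprCost_rpow (hr0 : 0 < r) (hne : (reprCost r F f).Nonempty) :
    normA r F f = sInf (reprCost r F f) ^ (1 / r) := by
  have himage : normA r F f = sInf ((· ^ (1 / r)) '' reprCost r F f) := by
    rw [normA]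
    congr 1
    ext t
    constructor
    · rintro ⟨c, g, hc, hf, rfl⟩
      exact ⟨_, ⟨c, g, hc, hf, rfl⟩, rfl⟩
    · rintro ⟨_, ⟨c, g, hc, hf, rfl⟩, rfl⟩
      exact ⟨c, g, hc, hf, rfl⟩
  rw [himage]
  refine (MonotoneOn.map_csInf_of_continuousWithinAt ?_ ?_ hne reprCost_bddBelow).symm
  · exact (Real.continuousAt_rpow_const _ _ (Or.inr (by positivity))).continuousWithinAt
  · exact fun a ha b _ hab => Real.rpow_le_rpow (nonneg_of_mem_reprCost ha) hab (by positivity)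

theorem reprCost_nonempty (hr0 : 0 < r) (hF : ∀ γ ∈ F, IsChar γ) (f : F → ℂ) :
    (reprCost r F f).Nonempty := by
  have hf : f ∈ Submodule.span ℂ (Set.range fun g (γ : F) => (γ : G → ℂ) g) := by
    rw [(linearIndependent_of_isChar F hF).span_range_eval_eq_top]
    exact Submodule.mem_top
  obtain ⟨a, rfl⟩ := Finsupp.mem_span_range_iff_exists_finsupp.1 hf
  refine ⟨_, tsum_mem_reprCost_of_countable hr0 (c := fun g : a.support => a g)
    (g := Subtype.val) (Summable.of_finite) fun γ => ?_⟩
  rw [tsum_fintype, Finsupp.sum, Finset.sum_apply, ← Finset.sum_coe_sort]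
  simp

theorem norm_apply_rpow_le_of_mem_reprCost (hr0 : 0 < r) (hr1 : r ≤ 1)
    (hF : ∀ γ ∈ F, IsChar γ) (γ : F) (hs : s ∈ reprCost r F f) : ‖f γ‖ ^ r ≤ s := by
  obtain ⟨c, g, hc, hf, rfl⟩ := hs
  have hγ := hF γ γ.2
  rw [hf γ]
  simpa only [hγ.norm_mul_apply] using
    norm_tsum_rpow_le_tsum_norm_rpow hr0 hr1 (a := fun j => c j * (γ : G → ℂ) (g j))
      (by simpa only [hγ.norm_mul_apply] using hc)

theorem add_mem_reprCost (hr0 : 0 < r) (hr1 : r ≤ 1) (hF : ∀ γ ∈ F, IsChar γ)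
    (hs : s ∈ reprCost r F x) (ht : t ∈ reprCost r F y) : s + t ∈ reprCost r F (x + y) := by
  obtain ⟨c₁, g₁, hc₁, hx, rfl⟩ := hs
  obtain ⟨c₂, g₂, hc₂, hy, rfl⟩ := ht
  have hc : Summable fun i => ‖Sum.elim c₁ c₂ i‖ ^ r := Summable.sum _ hc₁ hc₂
  have hcost : ∑' i, ‖Sum.elim c₁ c₂ i‖ ^ r = ∑' j, ‖c₁ j‖ ^ r + ∑' j, ‖c₂ j‖ ^ r :=
    Summable.tsum_sum hc₁ hc₂
  rw [← hcost]
  refine tsum_mem_reprCost_of_countable hr0 (g := Sum.elim g₁ g₂) hc fun γ => ?_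
  have hγ := hF γ γ.2
  rw [Pi.add_apply, hx, hy]
  exact (Summable.tsum_sum (f := fun i => Sum.elim c₁ c₂ i * (γ : G → ℂ) (Sum.elim g₁ g₂ i))
    (hγ.summable_norm_mul hr0 hr1 hc₁ g₁).of_norm
    (hγ.summable_norm_mul hr0 hr1 hc₂ g₂).of_norm).symm

theorem mul_mem_reprCost (hr0 : 0 < r) (hr1 : r ≤ 1) (hF : ∀ γ ∈ F, IsChar γ)
    (hs : s ∈ reprCost r F x) (ht : t ∈ reprCost r F y) : s * t ∈ reprCost r F (x * y) := by
  obtain ⟨c₁, g₁, hc₁, hx, rfl⟩ := hs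
  obtain ⟨c₂, g₂, hc₂, hy, rfl⟩ := ht
  have hnorm : ∀ q : ℕ × ℕ, ‖c₁ q.1 * c₂ q.2‖ ^ r = ‖c₁ q.1‖ ^ r * ‖c₂ q.2‖ ^ r := fun _ => by
    rw [norm_mul, Real.mul_rpow (norm_nonneg _) (norm_nonneg _)]
  have hc : Summable fun q : ℕ × ℕ => ‖c₁ q.1 * c₂ q.2‖ ^ r := by
    simpa only [hnorm] using hc₁.mul_of_nonneg hc₂
      (fun _ => Real.rpow_nonneg (norm_nonneg _) r) fun _ => Real.rpow_nonneg (norm_nonneg _) r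
  rw [hc₁.tsum_mul_tsum hc₂ (by simpa only [hnorm] using hc)]
  simp_rw [← hnorm]
  refine tsum_mem_reprCost_of_countable hr0 (g := fun q => g₁ q.1 * g₂ q.2) hc fun γ => ?_
  have hγ := hF γ γ.2
  rw [Pi.mul_apply, hx, hy, tsum_mul_tsum_of_summable_norm
    (hγ.summable_norm_mul hr0 hr1 hc₁ g₁) (hγ.summable_norm_mul hr0 hr1 hc₂ g₂)]
  refine tsum_congr fun q => ?_
  rw [hγ.2.1]
  ring

theorem sInf_reprCost_smul_le (hr0 : 0 < r) (hF : ∀ γ ∈ F, IsChar γ) (a : ℂ) (f : F → ℂ) :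
    sInf (reprCost r F (a • f)) ≤ ‖a‖ ^ r * sInf (reprCost r F f) := by
  rw [← smul_eq_mul, ← Real.sInf_smul_of_nonneg (Real.rpow_nonneg (norm_nonneg a) r)]
  exact csInf_le_csInf reprCost_bddBelow (reprCost_nonempty hr0 hF f).smul_set
    (Set.smul_set_subset_iff.2 fun _ hs => smul_mem_reprCost a hs)

theorem sInf_reprCost_add_le (hr0 : 0 < r) (hr1 : r ≤ 1) (hF : ∀ γ ∈ F, IsChar γ)
    (x y : F → ℂ) :
    sInf (reprCost r F (x + y)) ≤ sInf (reprCost r F x) + sInf (reprCost r F y) := by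
  rw [← csInf_add (reprCost_nonempty hr0 hF x) reprCost_bddBelow (reprCost_nonempty hr0 hF y)
    reprCost_bddBelow]
  exact csInf_le_csInf reprCost_bddBelow
    ((reprCost_nonempty hr0 hF x).add (reprCost_nonempty hr0 hF y))
    (Set.add_subset_iff.2 fun _ hs _ ht => add_mem_reprCost hr0 hr1 hF hs ht)

theorem sInf_reprCost_mul_le (hr0 : 0 < r) (hr1 : r ≤ 1) (hF : ∀ γ ∈ F, IsChar γ)
    (x y : F → ℂ) :
    sInf (reprCost r F (x * y)) ≤ sInf (reprCost r F x) * sInf (reprCost r F y) :=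
  Real.sInf_le_sInf_mul_sInf (reprCost_nonempty hr0 hF x) (reprCost_nonempty hr0 hF y)
    reprCost_bddBelow (fun _ => nonneg_of_mem_reprCost) (fun _ => nonneg_of_mem_reprCost)
    fun _ hs _ ht => mul_mem_reprCost hr0 hr1 hF hs ht

theorem norm_apply_rpow_le_sInf_reprCost (hr0 : 0 < r) (hr1 : r ≤ 1) (hF : ∀ γ ∈ F, IsChar γ)
    (f : F → ℂ) (γ : F) : ‖f γ‖ ^ r ≤ sInf (reprCost r F f) :=
  le_csInf (reprCost_nonempty hr0 hF f) fun _ =>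
    norm_apply_rpow_le_of_mem_reprCost hr0 hr1 hF γ

end Representations

theorem statement6_general {G : Type} [CommGroup G] [TopologicalSpace G]
    (r : ℝ) (hr0 : 0 < r) (hr1 : r < 1)
    (F : Finset (G → ℂ)) (hF : ∀ γ ∈ F, IsChar γ) :
    (∀ f : ↥F → ℂ, ∃ (c : ℕ → ℂ) (g : ℕ → G), Summable (fun j => ‖c j‖ ^ r) ∧
        ∀ γ : ↥F, f γ = ∑' j : ℕ, c j * (γ : G → ℂ) (g j)) ∧
    IsRNorm r (normA r F) ∧
    (∀ f₁ f₂ : ↥F → ℂ, normA r F (f₁ * f₂) ≤ normA r F f₁ * normA r F f₂) := by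
  have hnormA : normA r F = fun f => sInf (reprCost r F f) ^ (1 / r) :=
    funext fun f => normA_eq_sInf_reprCost_rpow hr0 (reprCost_nonempty hr0 hF f)
  have hnonneg : ∀ f, 0 ≤ sInf (reprCost r F f) := fun _ =>
    Real.sInf_nonneg fun _ => nonneg_of_mem_reprCost
  refine ⟨fun f => ?_, ?_, fun f₁ f₂ => ?_⟩
  · obtain ⟨_, c, g, hc, hf, -⟩ := reprCost_nonempty hr0 hF f
    exact ⟨c, g, hc, hf⟩
  · rw [hnormA]
    refine isRNorm_rpow_one_div hr0 hnonneg (fun f hf => ?_) (sInf_reprCost_smul_le hr0 hF)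
      (sInf_reprCost_add_le hr0 hr1.le hF)
    obtain ⟨γ, hγ⟩ := Function.ne_iff.1 hf
    exact (Real.rpow_pos_of_pos (norm_pos_iff.2 hγ) r).trans_le
      (norm_apply_rpow_le_sInf_reprCost hr0 hr1.le hF f γ)
  · rw [hnormA, ← Real.mul_rpow (hnonneg f₁) (hnonneg f₂)]
    exact Real.rpow_le_rpow (hnonneg _) (sInf_reprCost_mul_le hr0 hr1.le hF f₁ f₂)
      (by positivity)

/-- For a finite set `F` of (distinct) continuous characters of `G` and
`0 < r < 1`: every `f : F → ℂ` admits a representation (so `‖f‖_A < ∞`), `‖⬝‖_A` is an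
`r`-norm on `ℓ∞(F)`, and it is submultiplicative for the pointwise product. -/
theorem statement6 {G : Type} [CommGroup G] [TopologicalSpace G] [IsTopologicalGroup G]
    [CompactSpace G] (r : ℝ) (hr0 : 0 < r) (hr1 : r < 1)
    (F : Finset (G → ℂ)) (hF : ∀ γ ∈ F, IsChar γ) :
    (∀ f : ↥F → ℂ, ∃ (c : ℕ → ℂ) (g : ℕ → G), Summable (fun j => ‖c j‖ ^ r) ∧
        ∀ γ : ↥F, f γ = ∑' j : ℕ, c j * (γ : G → ℂ) (g j)) ∧
    IsRNorm r (normA r F) ∧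
    (∀ f₁ f₂ : ↥F → ℂ, normA r F (f₁ * f₂) ≤ normA r F f₁ * normA r F f₂) :=
  statement6_general r hr0 hr1 F hF

end
end

section
/- Let (λ_k)_{k≥1} be a strictly increasing sequence of positive integers and let m ≥ 1. Then the set {λ_k : k ≥ 1} can be partitioned into m subsets, each of which, arranged in increasing order, is a Hadamard gap sequence, if and only if there exists q > 1 such that λ_{k+m} ≥ q^m λ_k for every k ≥ 1. -/
open MeasureTheory Complex
open scoped ENNReal NNReal

noncomputable section

/-- A set `S ⊆ ℕ` of positive integers which, arranged in increasing order, is a Hadamard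
gap sequence: for some `q > 1`, any two consecutive elements of `S` have ratio `≥ q`.
(Finite sets are admitted.) -/
def IsHadamardSet (S : Set ℕ) : Prop :=
  (∀ n ∈ S, 0 < n) ∧ ∃ q : ℝ, 1 < q ∧
    ∀ a ∈ S, ∀ b ∈ S, a < b → (∀ c ∈ S, c ≤ a ∨ b ≤ c) → q * (a : ℝ) ≤ (b : ℝ)

/- A Hadamard set with ratio `q` satisfies `q a ≤ b` for all `a < b` in it, not only for consecutive
ones: compare `a` with its successor in the set. Pigeonholing `λ_k, …, λ_{k+m}` into `m` Hadamard
sets therefore gives `λ_{k+m} ≥ Q λ_k` with `Q` the least ratio, and `q = Q ^ (1/m)`. Conversely the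
residue classes of the index modulo `m` are Hadamard with ratio `q ^ m`. -/

open Filter Topology

lemma mul_le_of_forall_consecutive {S : Set ℕ} {q : ℝ}
    (hS : ∀ a ∈ S, ∀ b ∈ S, a < b → (∀ c ∈ S, c ≤ a ∨ b ≤ c) → q * a ≤ b)
    {a b : ℕ} (ha : a ∈ S) (hb : b ∈ S) (hab : a < b) : q * a ≤ b := by
  classical
  have hex : ∃ n, n ∈ S ∧ a < n := ⟨b, hb, hab⟩
  obtain ⟨hsucc, ha_lt⟩ := Nat.find_spec hex
  have hsucc_le : ∀ c ∈ S, a < c → Nat.find hex ≤ c := fun c hc hac => Nat.find_min' hex ⟨hc, hac⟩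
  have hcons : ∀ c ∈ S, c ≤ a ∨ Nat.find hex ≤ c := fun c hc =>
    (le_or_gt c a).imp_right (hsucc_le c hc)
  calc q * a ≤ Nat.find hex := hS a ha _ hsucc ha_lt hcons
    _ ≤ b := by exact_mod_cast hsucc_le b hb hab

lemma IsHadamardSet.exists_ratio {S : Set ℕ} (hS : IsHadamardSet S) :
    ∃ q : ℝ, 1 < q ∧ ∀ a ∈ S, ∀ b ∈ S, a < b → q * a ≤ b := by
  obtain ⟨-, q, hq, hcons⟩ := hS
  exact ⟨q, hq, fun a ha b hb hab => mul_le_of_forall_consecutive hcons ha hb hab⟩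

lemma isHadamardSet_of_forall_mul_le {S : Set ℕ} {q : ℝ} (hpos : ∀ n ∈ S, 0 < n) (hq : 1 < q)
    (hS : ∀ a ∈ S, ∀ b ∈ S, a < b → q * a ≤ b) : IsHadamardSet S :=
  ⟨hpos, q, hq, fun a ha b hb hab _ => hS a ha b hb hab⟩

lemma exists_common_ratio_of_isHadamardSet {ι : Type*} [Finite ι] {A : ι → Set ℕ}
    (hA : ∀ i, IsHadamardSet (A i)) :
    ∃ Q : ℝ, 1 < Q ∧ ∀ i, ∀ a ∈ A i, ∀ b ∈ A i, a < b → Q * a ≤ b := by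
  choose q hq hratio using fun i => (hA i).exists_ratio
  have hsmall : ∀ i, ∀ᶠ Q in 𝓝[>] (1 : ℝ), Q ≤ q i := fun i =>
    mem_of_superset (Ioo_mem_nhdsGT (hq i)) fun Q hQ => hQ.2.le
  obtain ⟨Q, hQq, hQ1⟩ := ((eventually_all.2 hsmall).and self_mem_nhdsWithin).exists
  refine ⟨Q, hQ1, fun i a ha b hb hab => ?_⟩
  calc Q * a ≤ q i * a := by gcongr; exact hQq i
    _ ≤ b := hratio i a ha b hb hab

lemma mul_le_add_card_of_range_subset_iUnion {ι : Type*} [Fintype ι] {lam : ℕ → ℕ}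
    (hmono : StrictMono lam) {A : ι → Set ℕ} (hcover : Set.range lam ⊆ ⋃ i, A i) {Q : ℝ}
    (hQ : 0 ≤ Q) (hA : ∀ i, ∀ a ∈ A i, ∀ b ∈ A i, a < b → Q * a ≤ b) (k : ℕ) :
    Q * lam k ≤ lam (k + Fintype.card ι) := by
  have hmem : ∀ s : Fin (Fintype.card ι + 1), ∃ i, lam (k + s) ∈ A i := fun s =>
    Set.mem_iUnion.mp (hcover ⟨k + s, rfl⟩)
  choose f hf using hmem
  obtain ⟨s, t, hst, hfst⟩ := Fintype.exists_ne_map_eq_of_card_lt f (by simp)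
  wlog hlt : s < t generalizing s t
  · exact this t s hst.symm hfst.symm (hst.lt_or_gt.resolve_left hlt)
  calc Q * lam k ≤ Q * lam (k + s) := by gcongr; exact hmono.monotone (Nat.le_add_right k s)
    _ ≤ lam (k + t) := hA (f s) _ (hf s) _ (hfst ▸ hf t) (hmono (by omega : k + s < k + t))
    _ ≤ lam (k + Fintype.card ι) := by
      gcongr; exact hmono.monotone (by omega : k + t ≤ k + Fintype.card ι)

lemma pairwise_disjoint_image_mod {lam : ℕ → ℕ} (hinj : Function.Injective lam) (m : ℕ) :
    ∀ i j : Fin m, i ≠ j → Disjoint (lam '' {k | k % m = i}) (lam '' {k | k % m = j}) := by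
  intro i j hij
  rw [Set.disjoint_image_iff hinj, Set.disjoint_left]
  intro k hki hkj
  exact hij (Fin.ext (hki.symm.trans hkj))

lemma iUnion_image_mod {m : ℕ} (hm : 1 ≤ m) (lam : ℕ → ℕ) :
    ⋃ i : Fin m, lam '' {k | k % m = i} = Set.range lam := by
  rw [← Set.image_iUnion, ← Set.image_univ]
  congr 1
  exact Set.eq_univ_of_forall fun k => Set.mem_iUnion.2 ⟨⟨k % m, Nat.mod_lt k hm⟩, rfl⟩

lemma mul_le_of_mod_eq {lam : ℕ → ℕ} (hmono : StrictMono lam) {m : ℕ} {Q : ℝ}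
    (hgap : ∀ k, Q * lam k ≤ lam (k + m)) {r : ℕ} :
    ∀ a ∈ lam '' {k | k % m = r}, ∀ b ∈ lam '' {k | k % m = r}, a < b → Q * a ≤ b := by
  rintro _ ⟨k, hk, rfl⟩ _ ⟨k', hk', rfl⟩ hlt
  have hkk' : k < k' := hmono.lt_iff_lt.mp hlt
  have hkm : k + m ≤ k' := by
    obtain ⟨d, hd⟩ := (Nat.modEq_iff_dvd' hkk'.le).mp (hk.trans hk'.symm)
    have hd_pos : 0 < d := Nat.pos_of_ne_zero fun h => by simp [h] at hd; omega
    have := Nat.le_mul_of_pos_right m hd_pos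
    omega
  calc Q * lam k ≤ lam (k + m) := hgap k
    _ ≤ lam k' := by exact_mod_cast hmono.monotone hkm

/-- Let `(λ_k)` be a strictly increasing sequence of positive integers
and `m ≥ 1`. Then `{λ_k : k}` can be partitioned into `m` sets which are Hadamard gap
sequences if and only if there is `q > 1` with `λ_{k+m} ≥ q^m λ_k` for all `k`. -/
theorem statement10 (lam : ℕ → ℕ) (hmono : StrictMono lam) (hpos : ∀ k, 0 < lam k)
    (m : ℕ) (hm : 1 ≤ m) :
    (∃ A : Fin m → Set ℕ, (∀ i j, i ≠ j → Disjoint (A i) (A j)) ∧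
        (⋃ i, A i) = Set.range lam ∧ ∀ i, IsHadamardSet (A i)) ↔
    (∃ q : ℝ, 1 < q ∧ ∀ k : ℕ, q ^ m * (lam k : ℝ) ≤ (lam (k + m) : ℝ)) := by
  constructor
  · rintro ⟨A, -, hcover, hA⟩
    obtain ⟨Q, hQ1, hQ⟩ := exists_common_ratio_of_isHadamardSet hA
    have hgap := mul_le_add_card_of_range_subset_iUnion hmono hcover.ge (by linarith) hQ
    refine ⟨Q ^ ((m : ℝ)⁻¹), Real.one_lt_rpow hQ1 (by positivity), fun k => ?_⟩
    rw [Real.rpow_inv_natCast_pow (by linarith) (by omega)]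
    simpa using hgap k
  · rintro ⟨q, hq, hgap⟩
    refine ⟨fun i => lam '' {k | k % m = i}, pairwise_disjoint_image_mod hmono.injective m,
      iUnion_image_mod hm lam, fun i => ?_⟩
    exact isHadamardSet_of_forall_mul_le (by rintro _ ⟨k, -, rfl⟩; exact hpos k)
      (one_lt_pow₀ hq (by omega)) (mul_le_of_mod_eq hmono hgap)

end
end

section
/- The set E = {3^n : n ≥ 1} ∪ {3^n + n : n ≥ 1} ⊆ ℤ, which is a union of two Hadamard gap sequences, is not a set of interpolation: there exist a bounded function f : E → ℂ and ε > 0 such that for every N ∈ ℕ, all c_1,…,c_N ∈ ℂ and all ζ_1,…,ζ_N ∈ 𝕋, sup_{n∈E}|f(n) − ∑_{j=1}^N c_j ζ_j^n| > ε. -/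
open MeasureTheory Complex
open scoped ENNReal NNReal

noncomputable section

/-- The set `E = {3^n : n ≥ 1} ∪ {3^n + n : n ≥ 1}`, a union of two Hadamard gap
sequences. -/
def E12 : Set ℕ :=
  {a : ℕ | ∃ n : ℕ, 1 ≤ n ∧ a = 3 ^ n} ∪ {a : ℕ | ∃ n : ℕ, 1 ≤ n ∧ a = 3 ^ n + n}

/-! Take `f` to be the indicator of `{3^n : n ≥ 1}`. Given a trigonometric polynomial
`p(a) = ∑ c_j ζ_j^a`, recurrence in the compact group `𝕋^N` yields `n ≥ 1` with every `ζ_j^n`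
close to `1`, so `p(3^n + n)` is close to `p(3^n)`, while `f` drops from `1` to `0` between these
two points of `E`. Hence `p` cannot be within `1/4` of `f` on all of `E`. -/

open Filter Topology

theorem exists_pow_mem_of_mem_nhds_one {G : Type*} [Group G] [TopologicalSpace G]
    [IsTopologicalGroup G] [SeqCompactSpace G] (g : G) {U : Set G}
    (hU : U ∈ 𝓝 1) : ∃ n, 0 < n ∧ g ^ n ∈ U := by
  obtain ⟨x, φ, hφ, hx⟩ := SeqCompactSpace.tendsto_subseq (g ^ ·)
  have hquot : Tendsto (fun k => g ^ φ (k + 1) * (g ^ φ k)⁻¹) atTop (𝓝 1) := by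
    simpa using ((hx.comp (tendsto_add_atTop_nat 1)).mul hx.inv)
  obtain ⟨k, hk⟩ := (hquot.eventually_mem hU).exists
  exact ⟨φ (k + 1) - φ k, Nat.sub_pos_of_lt (hφ k.lt_succ_self),
    by rwa [pow_sub _ (hφ k.lt_succ_self).le]⟩

theorem exists_pow_mem_of_mem_nhds_one_of_norm_eq_one {ι : Type*} [Countable ι] {ζ : ι → ℂ}
    (hζ : ∀ j, ‖ζ j‖ = 1) {U : Set (ι → ℂ)} (hU : U ∈ 𝓝 1) : ∃ n, 0 < n ∧ ζ ^ n ∈ U := by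
  let z : ι → Circle := fun j => ⟨ζ j, mem_sphere_zero_iff_norm.2 (hζ j)⟩
  let coe : (ι → Circle) →* (ι → ℂ) :=
    MonoidHom.pi fun j => Circle.coeHom.comp (Pi.evalMonoidHom _ j)
  have hcoe : Continuous coe :=
    continuous_pi fun j => continuous_subtype_val.comp (continuous_apply j)
  obtain ⟨n, hn, hzn⟩ := exists_pow_mem_of_mem_nhds_one z
    (hcoe.continuousAt.preimage_mem_nhds (by rwa [map_one]) : coe ⁻¹' U ∈ 𝓝 1)
  exact ⟨n, hn, by rwa [Set.mem_preimage, map_pow] at hzn⟩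

theorem norm_sum_mul_pow_add_sub_le {ι R : Type*} [SeminormedCommRing R] [NormOneClass R]
    (s : Finset ι) (c ζ : ι → R) (hζ : ∀ j ∈ s, ‖ζ j‖ ≤ 1) (m n : ℕ) :
    ‖∑ j ∈ s, c j * ζ j ^ (m + n) - ∑ j ∈ s, c j * ζ j ^ m‖ ≤ ∑ j ∈ s, ‖c j‖ * ‖ζ j ^ n - 1‖ := by
  rw [← Finset.sum_sub_distrib]
  refine (norm_sum_le _ _).trans (Finset.sum_le_sum fun j hj => ?_)
  have hζm : ‖ζ j ^ m‖ ≤ 1 := (norm_pow_le _ _).trans (pow_le_one₀ (norm_nonneg _) (hζ j hj))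
  calc ‖c j * ζ j ^ (m + n) - c j * ζ j ^ m‖ = ‖c j * ζ j ^ m * (ζ j ^ n - 1)‖ := by ring_nf
    _ ≤ ‖c j‖ * ‖ζ j ^ m‖ * ‖ζ j ^ n - 1‖ := norm_mul₃_le
    _ ≤ ‖c j‖ * ‖ζ j ^ n - 1‖ := by gcongr; exact mul_le_of_le_one_right (norm_nonneg _) hζm

theorem pow_add_self_ne_pow {b n : ℕ} (hb : 2 ≤ b) (hn : 0 < n) (m : ℕ) : b ^ n + n ≠ b ^ m := by
  intro h
  have hlow : b ^ n < b ^ m := h ▸ Nat.lt_add_of_pos_right hn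
  have hhigh : b ^ m < b ^ (n + 1) := by
    rw [← h, pow_succ]
    nlinarith [Nat.lt_pow_self (n := n) (by omega : 1 < b)]
  rw [Nat.pow_lt_pow_iff_right (by omega)] at hlow hhigh
  omega

/-- The set `E = {3^n} ∪ {3^n + n}` is not a set of interpolation:
some bounded function on `E` cannot be approximated within some `ε > 0`, uniformly on
`E`, by trigonometric polynomials `n ↦ ∑_j c_j ζ_j^n` with `ζ_j ∈ 𝕋`. -/
theorem statement12 :
    ∃ f : ℕ → ℂ, (∃ B : ℝ, ∀ n ∈ E12, ‖f n‖ ≤ B) ∧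
      ∃ ε : ℝ, 0 < ε ∧
        ∀ (N : ℕ) (c : Fin N → ℂ) (ζ : Fin N → ℂ), (∀ j, ‖ζ j‖ = 1) →
          ∃ n ∈ E12, ε < ‖f n - ∑ j, c j * ζ j ^ n‖ := by
  set P : Set ℕ := {a | ∃ m : ℕ, 1 ≤ m ∧ a = 3 ^ m}
  refine ⟨P.indicator 1, ⟨1, fun a _ => (norm_indicator_le_norm_self _ a).trans (by simp)⟩,
    1 / 4, by norm_num, fun N c ζ hζ => ?_⟩
  by_contra! hclose
  set p : ℕ → ℂ := fun a => ∑ j, c j * ζ j ^ a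
  have hU : {x : Fin N → ℂ | ∑ j, ‖c j‖ * ‖x j - 1‖ < 1 / 2} ∈ 𝓝 1 :=
    (isOpen_lt (by fun_prop) continuous_const).mem_nhds (by simp)
  obtain ⟨n, hn, hreturn⟩ := exists_pow_mem_of_mem_nhds_one_of_norm_eq_one hζ hU
  have hdrift : ‖p (3 ^ n) - p (3 ^ n + n)‖ < 1 / 2 := by
    rw [norm_sub_rev]
    exact (norm_sum_mul_pow_add_sub_le _ c ζ (fun j _ => (hζ j).le) _ _).trans_lt hreturn
  have happrox_pow : ‖1 - p (3 ^ n)‖ ≤ 1 / 4 := by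
    simpa [Set.indicator_of_mem (show 3 ^ n ∈ P from ⟨n, hn, rfl⟩)] using
      hclose _ (Or.inl ⟨n, hn, rfl⟩)
  have happrox_shift : ‖p (3 ^ n + n)‖ ≤ 1 / 4 := by
    have hnotin : 3 ^ n + n ∉ P := fun ⟨m, _, hm⟩ => pow_add_self_ne_pow (by norm_num) hn m hm
    simpa [Set.indicator_of_notMem hnotin] using hclose _ (Or.inr ⟨n, hn, rfl⟩)
  have htriangle :=
    norm_add₃_le (a := 1 - p (3 ^ n)) (b := p (3 ^ n) - p (3 ^ n + n)) (c := p (3 ^ n + n))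
  simp only [sub_add_sub_cancel, sub_add_cancel, norm_one] at htriangle
  linarith

end
end

section
/- For every 0 < r ≤ 1 and 0 < p ≤ ∞ there is a constant C = C(r,p) such that for every complex vector space X with r-norm ν, all x_1,…,x_n ∈ X and all a_1,…,a_n ∈ ℂ with |a_k| ≤ 1 for each k: (∫_Δ ν(∑_{k=1}^n a_k ε_k(t) x_k)^p dμ_Δ(t))^{1/p} ≤ C(∫_Δ ν(∑_{k=1}^n ε_k(t)x_k)^p dμ_Δ(t))^{1/p}; for p = ∞ the integral means are replaced by suprema over Δ. -/
open MeasureTheory Complex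
open scoped ENNReal NNReal

noncomputable section

/-!
Write `Φ(a) = ‖∑ aₖ εₖ xₖ‖ₚ ^ ρ` for the `Lₚ`-quasinorm on `Δ`, where `ρ = r` if `p = ∞` and
`ρ = min r p` otherwise: this quasinorm is a `ρ`-norm, so `Φ` is subadditive and
`Φ(c a) = |c|^ρ Φ(a)`. Translation invariance of Haar measure on `Δ` gives `Φ(s) = Φ(1)` for every
sign vector `s`. Every `a` in the square `Q = {|Re aₖ|, |Im aₖ| ≤ 1}` splits as
`a = (s + i t + a') / 2` with sign vectors `s, t` and `a' ∈ Q`, so `M = sup_Q Φ` (finite, as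
`Φ(a) ≤ ∑ |aₖ|^ρ Φ(eₖ)`) satisfies `M ≤ 2^{-ρ} (2 Φ(1) + M)`, i.e. `M ≤ 2 Φ(1) / (2^ρ - 1)`.
-/

namespace IsRNorm

variable {X : Type*} [AddCommGroup X] [Module ℂ X] {r : ℝ} {ν : X → ℝ}

theorem mono (hν : IsRNorm r ν) {q : ℝ} (hq : 0 < q) (hqr : q ≤ r) : IsRNorm q ν := by
  refine ⟨hν.1, hν.2.1, hν.2.2.1, fun x y => ?_⟩
  have hr : 0 < r := hq.trans_le hqr
  have hrpow : ∀ z, ν z ^ q = (ν z ^ r) ^ (q / r) := fun z => by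
    rw [← Real.rpow_mul (hν.1 z), mul_div_cancel₀ q hr.ne']
  rw [hrpow, hrpow, hrpow]
  calc (ν (x + y) ^ r) ^ (q / r) ≤ (ν x ^ r + ν y ^ r) ^ (q / r) :=
        Real.rpow_le_rpow (Real.rpow_nonneg (hν.1 _) r) (hν.2.2.2 x y) (by positivity)
    _ ≤ (ν x ^ r) ^ (q / r) + (ν y ^ r) ^ (q / r) :=
        Real.rpow_add_le_add_rpow (Real.rpow_nonneg (hν.1 _) r) (Real.rpow_nonneg (hν.1 _) r)
          (by positivity) ((div_le_one hr).2 hqr)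

variable {Ω : Type*}

theorem iSup [Finite Ω] [Nonempty Ω] (hν : IsRNorm r ν) (hr : 0 ≤ r) :
    IsRNorm r (fun f : Ω → X => ⨆ θ, ν (f θ)) := by
  refine ⟨fun f => Real.iSup_nonneg fun θ => hν.1 _, fun f hf => ?_, fun c f => ?_,
    fun f g => ?_⟩ <;> beta_reduce
  · obtain ⟨θ, hθ⟩ := Function.ne_iff.1 hf
    exact (hν.2.1 _ hθ).trans_le (le_ciSup (Set.finite_range fun θ => ν (f θ)).bddAbove θ)
  · simp only [Pi.smul_apply, hν.2.2.1, Real.mul_iSup_of_nonneg (norm_nonneg c)]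
  · obtain ⟨θ, hθ⟩ := exists_eq_ciSup_of_finite (f := fun θ => ν ((f + g) θ))
    rw [← hθ]
    have hle : ∀ h : Ω → X, ν (h θ) ^ r ≤ (⨆ θ, ν (h θ)) ^ r := fun h =>
      Real.rpow_le_rpow (hν.1 _) (le_ciSup (Set.finite_range fun θ => ν (h θ)).bddAbove θ) hr
    exact (hν.2.2.2 _ _).trans (add_le_add (hle f) (hle g))

theorem sum_rpow [Fintype Ω] (hν : IsRNorm r ν) (hr : 0 < r) {q : ℝ} (hrq : r ≤ q) :
    IsRNorm r (fun f : Ω → X => (∑ θ, ν (f θ) ^ q) ^ (1 / q)) := by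
  have hq : 0 < q := hr.trans_le hrq
  have hsum_nonneg : ∀ f : Ω → X, 0 ≤ ∑ θ, ν (f θ) ^ q := fun f =>
    Finset.sum_nonneg fun θ _ => Real.rpow_nonneg (hν.1 _) q
  refine ⟨fun f => Real.rpow_nonneg (hsum_nonneg f) _, fun f hf => ?_, fun c f => ?_,
    fun f g => ?_⟩ <;> beta_reduce
  · obtain ⟨θ, hθ⟩ := Function.ne_iff.1 hf
    refine Real.rpow_pos_of_pos ((Real.rpow_pos_of_pos (hν.2.1 _ hθ) q).trans_le ?_) _
    exact Finset.single_le_sum (fun θ _ => Real.rpow_nonneg (hν.1 (f θ)) q) (Finset.mem_univ θ)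
  · simp only [Pi.smul_apply, hν.2.2.1, Real.mul_rpow (norm_nonneg c) (hν.1 _), ← Finset.mul_sum]
    rw [Real.mul_rpow (by positivity) (hsum_nonneg f), ← Real.rpow_mul (norm_nonneg c),
      mul_one_div_cancel hq.ne', Real.rpow_one]
  · set s := q / r
    have hs : 1 ≤ s := (one_le_div hr).2 hrq
    have hpow : ∀ h : Ω → X,
        ((∑ θ, ν (h θ) ^ q) ^ (1 / q)) ^ r = (∑ θ, (ν (h θ) ^ r) ^ s) ^ (1 / s) := fun h => by
      have hrs : ∀ θ, (ν (h θ) ^ r) ^ s = ν (h θ) ^ q := fun θ => by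
        rw [← Real.rpow_mul (hν.1 _), mul_div_cancel₀ q hr.ne']
      rw [← Real.rpow_mul (hsum_nonneg h), Finset.sum_congr rfl fun θ _ => hrs θ, one_div_div,
        one_div_mul_eq_div]
    rw [hpow, hpow, hpow]
    calc (∑ θ, (ν ((f + g) θ) ^ r) ^ s) ^ (1 / s)
        ≤ (∑ θ, (ν (f θ) ^ r + ν (g θ) ^ r) ^ s) ^ (1 / s) := by
          refine Real.rpow_le_rpow (Finset.sum_nonneg fun θ _ =>
            Real.rpow_nonneg (Real.rpow_nonneg (hν.1 _) r) s)
            (Finset.sum_le_sum fun θ _ => ?_) (by positivity)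
          exact Real.rpow_le_rpow (Real.rpow_nonneg (hν.1 _) r) (hν.2.2.2 _ _) (by positivity)
      _ ≤ _ := Real.Lp_add_le_of_nonneg _ hs (fun θ _ => Real.rpow_nonneg (hν.1 _) r)
          (fun θ _ => Real.rpow_nonneg (hν.1 _) r)

end IsRNorm

def unitSquare : Set ℂ := {z | |z.re| ≤ 1 ∧ |z.im| ≤ 1}

theorem mem_unitSquare_of_norm_le_one {z : ℂ} (hz : ‖z‖ ≤ 1) : z ∈ unitSquare :=
  ⟨(abs_re_le_norm z).trans hz, (abs_im_le_norm z).trans hz⟩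

theorem norm_le_two_of_mem_unitSquare {z : ℂ} (hz : z ∈ unitSquare) : ‖z‖ ≤ 2 :=
  (norm_le_abs_re_add_abs_im z).trans (by linarith [hz.1, hz.2])

theorem exists_two_mul_sub_sgn_mem_unitSquare {z : ℂ} (hz : z ∈ unitSquare) :
    ∃ b c : Bool, 2 * z - sgn b - I * sgn c ∈ unitSquare := by
  obtain ⟨hre, him⟩ := hz
  rw [abs_le] at hre him
  refine ⟨decide (0 ≤ z.re), decide (0 ≤ z.im), ?_, ?_⟩ <;> rw [abs_le] <;>
    by_cases h : 0 ≤ z.re <;> by_cases h' : 0 ≤ z.im <;>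
    simp only [sgn, h, h', decide_true, decide_false, if_true, if_false, Bool.false_eq_true,
      sub_re, sub_im, mul_re, mul_im, I_re, I_im, one_re, one_im, neg_re, neg_im, re_ofNat,
      im_ofNat] <;>
    constructor <;> linarith

section ComplexHomogeneous

variable {ι : Type*} [Fintype ι] {ρ : ℝ} {Φ : (ι → ℂ) → ℝ}

theorem bddAbove_image_unitSquare (hρ : 0 < ρ) (hadd : ∀ a b, Φ (a + b) ≤ Φ a + Φ b)
    (hsmul : ∀ (c : ℂ) a, Φ (c • a) = ‖c‖ ^ ρ * Φ a) :
    BddAbove (Φ '' {a | ∀ k, a k ∈ unitSquare}) := by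
  classical
  refine ⟨∑ k, 2 ^ ρ * |Φ (Pi.single k 1)|, ?_⟩
  rintro _ ⟨a, ha, rfl⟩
  have hzero : Φ 0 = 0 := by simpa [Real.zero_rpow hρ.ne'] using hsmul 0 0
  calc Φ a = Φ (∑ k, a k • Pi.single k 1) := by congr 1; ext; simp [Pi.single_apply]
    _ ≤ ∑ k, Φ (a k • Pi.single k 1) := Finset.le_sum_of_subadditive Φ hzero.le hadd _ _
    _ ≤ ∑ k, 2 ^ ρ * |Φ (Pi.single k 1)| := Finset.sum_le_sum fun k _ => by
        rw [hsmul]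
        exact (le_abs_self _).trans <| by
          rw [abs_mul, abs_of_nonneg (by positivity)]
          gcongr
          exact norm_le_two_of_mem_unitSquare (ha k)

theorem apply_le_of_forall_sgn_le (hρ : 0 < ρ) (hadd : ∀ a b, Φ (a + b) ≤ Φ a + Φ b)
    (hsmul : ∀ (c : ℂ) a, Φ (c • a) = ‖c‖ ^ ρ * Φ a) {B : ℝ}
    (hsign : ∀ s : ι → Bool, Φ (fun k => sgn (s k)) ≤ B) {a : ι → ℂ}
    (ha : ∀ k, a k ∈ unitSquare) : Φ a ≤ 2 * B / (2 ^ ρ - 1) := by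
  set Q : Set (ι → ℂ) := {a | ∀ k, a k ∈ unitSquare}
  have hbdd := bddAbove_image_unitSquare hρ hadd hsmul
  set M := sSup (Φ '' Q)
  have h2ρ : 1 < (2 : ℝ) ^ ρ := Real.one_lt_rpow one_lt_two hρ
  have hstep : ∀ a ∈ Q, Φ a ≤ (2 ^ ρ)⁻¹ * (2 * B + M) := by
    intro a ha
    choose s t ha' using fun k => exists_two_mul_sub_sgn_mem_unitSquare (ha k)
    set a' : ι → ℂ := fun k => 2 * a k - sgn (s k) - I * sgn (t k)
    have hdecomp : a = (2⁻¹ : ℂ) • ((fun k => sgn (s k)) + I • (fun k => sgn (t k)) + a') := by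
      ext k; simp only [a', Pi.smul_apply, Pi.add_apply, smul_eq_mul]; ring
    have hΦa' : Φ a' ≤ M := le_csSup hbdd ⟨a', ha', rfl⟩
    rw [hdecomp, hsmul, norm_inv, Complex.norm_two, Real.inv_rpow zero_le_two]
    gcongr
    calc Φ (_ + I • _ + a') ≤ Φ (fun k => sgn (s k)) + Φ (I • fun k => sgn (t k)) + Φ a' :=
          (hadd _ _).trans (by gcongr; exact hadd _ _)
      _ ≤ B + B + M := by
          rw [hsmul, norm_I, Real.one_rpow, one_mul]
          gcongr <;> exact hsign _
      _ = 2 * B + M := by ring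
  have hM : M ≤ (2 ^ ρ)⁻¹ * (2 * B + M) :=
    csSup_le ⟨Φ 0, 0, fun k => by simp [unitSquare], rfl⟩ <| by
      rintro _ ⟨a, ha, rfl⟩
      exact hstep a ha
  calc Φ a ≤ M := le_csSup hbdd ⟨a, ha, rfl⟩
    _ ≤ 2 * B / (2 ^ ρ - 1) := by
        rw [le_div_iff₀ (by linarith)]
        rw [inv_mul_eq_div, le_div_iff₀ (by linarith)] at hM
        linarith

end ComplexHomogeneous

def contractionConst (ρ : ℝ) : ℝ := (2 / (2 ^ ρ - 1)) ^ (1 / ρ)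

theorem contractionConst_pos {ρ : ℝ} (hρ : 0 < ρ) : 0 < contractionConst ρ := by
  have : 0 < (2 : ℝ) ^ ρ - 1 := sub_pos.2 (Real.one_lt_rpow one_lt_two hρ)
  unfold contractionConst
  positivity

theorem sgn_mul_sgn (b c : Bool) : sgn b * sgn c = sgn (b == c) := by
  cases b <;> cases c <;> simp [sgn]

def signFlip {ι : Type*} (s : ι → Bool) : Equiv.Perm (ι → Bool) :=
  Function.Involutive.toPerm (fun θ k => s k == θ k) fun θ => by
    funext k
    show (s k == (s k == θ k)) = θ k
    cases s k <;> cases θ k <;> rfl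

@[simp]
theorem signFlip_apply {ι : Type*} (s θ : ι → Bool) (k : ι) : signFlip s θ k = (s k == θ k) :=
  rfl

theorem IsRNorm.sign_contraction {ι X : Type*} [Fintype ι] [AddCommGroup X] [Module ℂ X]
    {ρ : ℝ} (hρ : 0 < ρ) {N : ((ι → Bool) → X) → ℝ} (hN : IsRNorm ρ N)
    (hinv : ∀ (f : (ι → Bool) → X) (e : Equiv.Perm (ι → Bool)), N (f ∘ e) = N f)
    (x : ι → X) {a : ι → ℂ} (ha : ∀ k, ‖a k‖ ≤ 1) :
    N (fun θ => ∑ k, sgn (θ k) • (a k • x k)) ≤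
      contractionConst ρ * N (fun θ => ∑ k, sgn (θ k) • x k) := by
  set F : (ι → ℂ) → (ι → Bool) → X := fun a θ => ∑ k, sgn (θ k) • (a k • x k)
  have hF_add : ∀ a b, F (a + b) = F a + F b := fun a b => by
    ext θ; simp [F, add_smul, Finset.sum_add_distrib]
  have hF_smul : ∀ (c : ℂ) a, F (c • a) = c • F a := fun c a => by
    ext θ; simp [F, Finset.smul_sum, smul_smul, mul_left_comm]
  have hF_sign : ∀ s, F (fun k => sgn (s k)) = F 1 ∘ signFlip s := fun s => by
    ext θ; simp [F, smul_smul, mul_comm, sgn_mul_sgn]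
  have h2ρ : 1 < (2 : ℝ) ^ ρ := Real.one_lt_rpow one_lt_two hρ
  have hΦ : N (F a) ^ ρ ≤ 2 * N (F 1) ^ ρ / (2 ^ ρ - 1) := by
    refine apply_le_of_forall_sgn_le (Φ := fun a => N (F a) ^ ρ) hρ
      (fun a b => by simpa only [hF_add] using hN.2.2.2 (F a) (F b))
      (fun c a => by simp only [hF_smul, hN.2.2.1, Real.mul_rpow (norm_nonneg c) (hN.1 _)])
      (fun s => by rw [hF_sign, hinv]) fun k => mem_unitSquare_of_norm_le_one (ha k)
  have hroot : ∀ y : ℝ, 0 ≤ y → (y ^ ρ) ^ (1 / ρ) = y := fun y hy => by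
    rw [← Real.rpow_mul hy, mul_one_div_cancel hρ.ne', Real.rpow_one]
  calc N (F a) = (N (F a) ^ ρ) ^ (1 / ρ) := (hroot _ (hN.1 _)).symm
    _ ≤ (2 / (2 ^ ρ - 1) * N (F 1) ^ ρ) ^ (1 / ρ) := by
        gcongr
        · exact Real.rpow_nonneg (hN.1 _) ρ
        · rwa [div_mul_eq_mul_div]
    _ = (2 / (2 ^ ρ - 1)) ^ (1 / ρ) * N (F 1) := by
        rw [Real.mul_rpow (by positivity) (Real.rpow_nonneg (hN.1 _) ρ), hroot _ (hN.1 _)]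
    _ = _ := by simp [F, contractionConst]

theorem radMean_eq_mul_of_ne_top {X : Type*} [AddCommGroup X] [Module ℂ X] {ν : X → ℝ}
    (hν : ∀ x, 0 ≤ ν x) {p : ℝ≥0∞} (hp : p ≠ ⊤) {n : ℕ} (x : Fin n → X) :
    radMean ν p x = ((2 : ℝ) ^ n)⁻¹ ^ (1 / p.toReal) *
      (∑ θ : Fin n → Bool, ν (∑ k, sgn (θ k) • x k) ^ p.toReal) ^ (1 / p.toReal) := by
  rw [radMean, if_neg hp, div_eq_inv_mul,
    Real.mul_rpow (by positivity) (Finset.sum_nonneg fun θ _ => Real.rpow_nonneg (hν _) _)]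

theorem statement13_general (r : ℝ) (hr0 : 0 < r) (p : ℝ≥0∞) (hp : 0 < p) :
    ∃ C : ℝ, 0 < C ∧
      ∀ (X : Type) [AddCommGroup X] [Module ℂ X] (ν : X → ℝ), IsRNorm r ν →
        ∀ (n : ℕ) (x : Fin n → X) (a : Fin n → ℂ), (∀ k, ‖a k‖ ≤ 1) →
          radMean ν p (fun k => a k • x k) ≤ C * radMean ν p x := by
  rcases eq_or_ne p ⊤ with rfl | hp_top
  · refine ⟨contractionConst r, contractionConst_pos hr0, fun X _ _ ν hν n x a ha => ?_⟩
    simpa [radMean] using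
      (hν.iSup hr0.le).sign_contraction hr0 (fun f e => e.iSup_comp (g := fun θ => ν (f θ))) x ha
  · set q := p.toReal
    set ρ := min r q
    have hρ : 0 < ρ := lt_min hr0 (ENNReal.toReal_pos hp.ne' hp_top)
    refine ⟨contractionConst ρ, contractionConst_pos hρ, fun X _ _ ν hν n x a ha => ?_⟩
    have hN : IsRNorm ρ fun f : (Fin n → Bool) → X => (∑ θ, ν (f θ) ^ q) ^ (1 / q) :=
      (hν.mono hρ (min_le_left r q)).sum_rpow hρ (min_le_right r q)
    have hcontr := hN.sign_contraction hρ
      (fun f e => congrArg (· ^ (1 / q)) (Equiv.sum_comp e fun θ => ν (f θ) ^ q)) x ha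
    rw [radMean_eq_mul_of_ne_top hν.1 hp_top, radMean_eq_mul_of_ne_top hν.1 hp_top,
      mul_left_comm]
    exact mul_le_mul_of_nonneg_left hcontr (by positivity)

/-- For `0 < r ≤ 1` and `0 < p ≤ ∞` there is `C = C(r,p)` such that for
every `r`-normed space `X`, all `x_1, …, x_n ∈ X` and scalars `|a_k| ≤ 1`:
`‖∑ a_k ε_k x_k‖_p ≤ C ‖∑ ε_k x_k‖_p`. -/
theorem statement13 (r : ℝ) (hr0 : 0 < r) (hr1 : r ≤ 1) (p : ℝ≥0∞) (hp : 0 < p) :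
    ∃ C : ℝ, 0 < C ∧
      ∀ (X : Type) [AddCommGroup X] [Module ℂ X] (ν : X → ℝ), IsRNorm r ν →
        ∀ (n : ℕ) (x : Fin n → X) (a : Fin n → ℂ), (∀ k, ‖a k‖ ≤ 1) →
          radMean ν p (fun k => a k • x k) ≤ C * radMean ν p x :=
  statement13_general r hr0 p hp

end
end
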